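/- For any vectorial Boolean function F: F_2^m → F_2^m and any nonzero a in F_2^m, the sum over all λ in F_2^m of F(D_a F_λ)^2 is at least 2^{2m+1}. -/
import Mathlib


open scoped Classical

/-- Boolean functions on `m` bits. -/
abbrev BF (m : ℕ) := (Fin m → ZMod 2) → ZMod 2

/-- Vectorial Boolean functions on `m` bits. -/
abbrev VBF (m : ℕ) := (Fin m → ZMod 2) → (Fin m → ZMod 2)

/-- Derivative of a Boolean function in direction `a`. -/
def bDeriv {m : ℕ} (a : Fin m → ZMod 2) (f : BF m) : BF m := fun x => f (x + a) + f x

/-- Component of a vectorial Boolean function in direction `lam`. -/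
def bComp {m : ℕ} (lam : Fin m → ZMod 2) (F : VBF m) : BF m := fun x => ∑ i, lam i * F x i

/-- Fourier coefficient at 0:  `∑ x, (-1)^(f x)`. -/
def bFourier {m : ℕ} (f : BF m) : ℤ := ∑ x : Fin m → ZMod 2, (-1 : ℤ) ^ (f x).val

/-- A Boolean function is balanced if it takes the value 1 exactly `2^(m-1)` times. -/
def bBalanced {m : ℕ} (f : BF m) : Prop :=
  (Finset.univ.filter (fun x => f x = 1)).card = 2 ^ (m - 1)

/-- Almost Perfect Nonlinear: every derivative equation `F(x+a)+F(x)=b`, `a ≠ 0`,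
has at most 2 solutions. -/
def bIsAPN {m : ℕ} (F : VBF m) : Prop :=
  ∀ a : Fin m → ZMod 2, a ≠ 0 → ∀ b : Fin m → ZMod 2,
    (Finset.univ.filter (fun x => F (x + a) + F x = b)).card ≤ 2

/-- Bent: all nonzero derivatives are balanced. -/
def bBent {m : ℕ} (f : BF m) : Prop := ∀ a, a ≠ 0 → bBalanced (bDeriv a f)

/-- ANF coefficient of `f` at the monomial indexed by `S`. -/
def bAnfCoeff {m : ℕ} (f : BF m) (S : Finset (Fin m)) : ZMod 2 :=
  ∑ x : Fin m → ZMod 2, (∏ i ∈ Sᶜ, (1 + x i)) * f x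

/-- Algebraic degree at most `d`. -/
def bDegLE {m : ℕ} (f : BF m) (d : ℕ) : Prop :=
  ∀ S : Finset (Fin m), d < S.card → bAnfCoeff f S = 0

/-- Algebraic degree of a Boolean function. -/
noncomputable def bAlgDeg {m : ℕ} (f : BF m) : ℕ := sInf {d | bDegLE f d}

/-- The restriction of `f` to the subspace `V` is affine. -/
def bAffineOn {m : ℕ} (f : BF m) (V : Submodule (ZMod 2) (Fin m → ZMod 2)) : Prop :=
  ∀ x ∈ V, ∀ y ∈ V, ∀ z ∈ V, f (x + y + z) = f x + f y + f z

/-- The restriction of `f` to the subspace `U` is bent: every derivative in a nonzero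
direction of `U` is balanced on `U`. -/
def bBentOn {m : ℕ} (f : BF m) (U : Submodule (ZMod 2) (Fin m → ZMod 2)) : Prop :=
  ∀ a ∈ U, a ≠ 0 →
    2 * (Finset.univ.filter (fun x => x ∈ U ∧ f (x + a) + f x = 1)).card
      = (Finset.univ.filter (fun x => x ∈ U)).card

/-- Partially bent Boolean function. -/
def bPartiallyBent {m : ℕ} (f : BF m) : Prop :=
  ∃ V U : Submodule (ZMod 2) (Fin m → ZMod 2), IsCompl V U ∧ bAffineOn f V ∧ bBentOn f U

/-- `a` is a linear structure of `f`: the derivative `D_a f` is constant. -/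
def bLinStruct {m : ℕ} (f : BF m) (a : Fin m → ZMod 2) : Prop :=
  ∃ c : ZMod 2, ∀ x, f (x + a) + f x = c

/-- The set of directions in which the derivative of `f` is balanced. -/
noncomputable def bGamma {m : ℕ} (f : BF m) : Finset (Fin m → ZMod 2) :=
  Finset.univ.filter (fun a => bBalanced (bDeriv a f))

private lemma chi_add (u v : ZMod 2) :
    ((-1:ℤ))^(u+v).val = ((-1:ℤ))^u.val * ((-1:ℤ))^v.val := by revert u v; decide

private lemma chi_sum {ι : Type*} (s : Finset ι) (u : ι → ZMod 2) :
    ((-1:ℤ))^(∑ i ∈ s, u i).val = ∏ i ∈ s, ((-1:ℤ))^(u i).val := by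
  induction s using Finset.cons_induction with
  | empty => simp
  | cons i s hi ih => rw [Finset.sum_cons, Finset.prod_cons, chi_add, ih]

private lemma single_orth (d : ZMod 2) :
    ∑ t : ZMod 2, ((-1:ℤ))^((t * d).val) = if d = 0 then 2 else 0 := by
  revert d; decide

private lemma orth (m : ℕ) (c : Fin m → ZMod 2) :
    ∑ lam : Fin m → ZMod 2, ∏ i, ((-1:ℤ))^((lam i * c i).val)
      = if c = 0 then 2^m else 0 := by
  classical
  have h1 : (∏ i : Fin m, ∑ t : ZMod 2, ((-1:ℤ))^((t * c i).val))
      = ∑ lam : Fin m → ZMod 2, ∏ i, ((-1:ℤ))^((lam i * c i).val) := by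
    rw [Finset.prod_univ_sum, Fintype.piFinset_univ]
  rw [← h1]
  by_cases hc : c = 0
  · simp [hc, single_orth]
  · obtain ⟨i, hi⟩ : ∃ i, c i ≠ 0 := by
      by_contra h
      push_neg at h
      exact hc (funext h)
    rw [if_neg hc]
    exact Finset.prod_eq_zero (Finset.mem_univ i) (by rw [single_orth, if_neg hi])

theorem stmt1 (m : ℕ) (F : VBF m) (a : Fin m → ZMod 2) (ha : a ≠ 0) :
    (2 : ℤ) ^ (2 * m + 1) ≤ ∑ lam : Fin m → ZMod 2, (bFourier (bDeriv a (bComp lam F))) ^ 2 := by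
  classical
  set D : VBF m := fun x => F (x + a) + F x with hD
  have hderiv : ∀ lam x, bDeriv a (bComp lam F) x = ∑ i, lam i * D x i := by
    intro lam x
    simp [bDeriv, bComp, hD, Pi.add_apply, mul_add, Finset.sum_add_distrib]
  have key : ∀ lam : Fin m → ZMod 2,
      (bFourier (bDeriv a (bComp lam F))) ^ 2
        = ∑ x : Fin m → ZMod 2, ∑ y : Fin m → ZMod 2,
            ∏ i, ((-1:ℤ))^((lam i * (D x i + D y i)).val) := by
    intro lam
    rw [pow_two, bFourier, Finset.sum_mul_sum]
    refine Finset.sum_congr rfl fun x _ => Finset.sum_congr rfl fun y _ => ?_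
    rw [hderiv, hderiv, ← chi_add, ← Finset.sum_add_distrib]
    have : (∑ i, (lam i * D x i + lam i * D y i))
        = ∑ i, lam i * (D x i + D y i) := by
      refine Finset.sum_congr rfl fun i _ => (mul_add _ _ _).symm
    rw [this, chi_sum]
  have swap : ∑ lam : Fin m → ZMod 2, (bFourier (bDeriv a (bComp lam F))) ^ 2
      = ∑ x : Fin m → ZMod 2, ∑ y : Fin m → ZMod 2,
          (if (fun i => D x i + D y i) = 0 then (2:ℤ)^m else 0) := by
    calc ∑ lam : Fin m → ZMod 2, (bFourier (bDeriv a (bComp lam F))) ^ 2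
        = ∑ lam : Fin m → ZMod 2, ∑ x : Fin m → ZMod 2, ∑ y : Fin m → ZMod 2,
            ∏ i, ((-1:ℤ))^((lam i * (D x i + D y i)).val) :=
          Finset.sum_congr rfl fun lam _ => key lam
      _ = ∑ x : Fin m → ZMod 2, ∑ y : Fin m → ZMod 2, ∑ lam : Fin m → ZMod 2,
            ∏ i, ((-1:ℤ))^((lam i * (D x i + D y i)).val) := by
          rw [Finset.sum_comm]
          exact Finset.sum_congr rfl fun x _ => Finset.sum_comm
      _ = ∑ x : Fin m → ZMod 2, ∑ y : Fin m → ZMod 2,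
            (if (fun i => D x i + D y i) = 0 then (2:ℤ)^m else 0) :=
          Finset.sum_congr rfl fun x _ => Finset.sum_congr rfl fun y _ =>
            orth m (fun i => D x i + D y i)
  rw [swap]
  -- now bound below
  have hself : ∀ u : ZMod 2, u + u = 0 := by decide
  have hxa : ∀ x : Fin m → ZMod 2, x ≠ x + a := by
    intro x hx
    apply ha
    funext i
    have h2 := congrFun hx i
    simp only [Pi.add_apply] at h2
    simp only [Pi.zero_apply]
    exact left_eq_add.mp h2
  set g : (Fin m → ZMod 2) → (Fin m → ZMod 2) → ℤ :=
    fun x y => (if (fun i => D x i + D y i) = 0 then (2:ℤ)^m else 0) with hg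
  have hnonneg : ∀ x y, 0 ≤ g x y := by
    intro x y
    simp only [hg]
    split <;> positivity
  have hgx : ∀ x, g x x = 2^m := by
    intro x
    simp only [hg]
    rw [if_pos]
    funext i; exact hself _
  have hgxa : ∀ x, g x (x + a) = 2^m := by
    intro x
    simp only [hg]
    rw [if_pos]
    funext i
    have hxaa : x + a + a = x := by
      funext j; simp only [Pi.add_apply]; rw [add_assoc, hself, add_zero]
    simp only [hD, Pi.add_apply, hxaa]
    have : ∀ u v : ZMod 2, (u + v) + (v + u) = 0 := by decide
    exact this _ _
  have hinner : ∀ x : Fin m → ZMod 2, (2:ℤ)^(m+1) ≤ ∑ y : Fin m → ZMod 2, g x y := by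
    intro x
    have hsub : ({x, x + a} : Finset (Fin m → ZMod 2)) ⊆ Finset.univ :=
      Finset.subset_univ _
    have := Finset.sum_le_sum_of_subset_of_nonneg hsub
      (fun y _ _ => hnonneg x y)
    rw [Finset.sum_pair (hxa x), hgx, hgxa] at this
    calc (2:ℤ)^(m+1) = 2^m + 2^m := by ring
      _ ≤ _ := this
  calc (2:ℤ) ^ (2*m+1) = ∑ _x : Fin m → ZMod 2, (2:ℤ)^(m+1) := by
        rw [Finset.sum_const, Finset.card_univ]
        have hcard : Fintype.card (Fin m → ZMod 2) = 2^m := by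
          simp [Fintype.card_fun]
        rw [hcard, nsmul_eq_mul]
        push_cast
        rw [← pow_add]
        ring_nf
    _ ≤ ∑ x : Fin m → ZMod 2, ∑ y : Fin m → ZMod 2, g x y :=
        Finset.sum_le_sum fun x _ => hinner x
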